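/- arXiv:2604.28112 — 2 statements merged into one kernel-verified Lean document; each statement's English description precedes it below -/
import Mathlib

section
/- Let F = (A,R,S) be a BSAF, (T,h) ∈ R, and F' = (A,R',S) where R' = (R \ {(T,h)}) ∪ {(cl(T),h)}. Then the stable extensions of F and F' coincide: stb(F) = stb(F'). -/
variable {α : Type*}

/-- A bipolar set-argumentation framework: arguments `A`, collective attacks `R`,
collective supports `S`. -/
structure BSAF (α : Type*) where
  A : Set α
  R : Set (Set α × α)
  S : Set (Set α × α)

namespace BSAF

/-- Membership in the least superset of `E` that is closed under the supports of `F`. -/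
inductive InCl (F : BSAF α) (E : Set α) : α → Prop
  | base {a : α} : a ∈ E → InCl F E a
  | step {T : Set α} {h : α} : (T, h) ∈ F.S → (∀ t ∈ T, InCl F E t) → InCl F E h

/-- The closure of `E` under the supports of `F`. -/
def cl (F : BSAF α) (E : Set α) : Set α := {a | F.InCl E a}

/-- `E` is closed if its closure equals itself. -/
def Closed (F : BSAF α) (E : Set α) : Prop := F.cl E = E

/-- `E` attacks the set `D`. -/
def Attacks (F : BSAF α) (E D : Set α) : Prop :=
  ∃ T h, (T, h) ∈ F.R ∧ T ⊆ E ∧ h ∈ D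

/-- `E` is conflict-free: it does not attack itself. -/
def ConflictFree (F : BSAF α) (E : Set α) : Prop :=
  ¬ ∃ T h, (T, h) ∈ F.R ∧ T ⊆ E ∧ h ∈ E

/-- `E` defends `a`: every closed attacker of `a` is attacked by `E`. -/
def Defends (F : BSAF α) (E : Set α) (a : α) : Prop :=
  ∀ D : Set α, D ⊆ F.A → F.Closed D → (∃ T, (T, a) ∈ F.R ∧ T ⊆ D) → F.Attacks E D

/-- `E` is admissible: conflict-free, closed, and defends each of its members. -/
def Admissible (F : BSAF α) (E : Set α) : Prop :=
  E ⊆ F.A ∧ F.ConflictFree E ∧ F.Closed E ∧ ∀ a ∈ E, F.Defends E a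

/-- `E` is complete: admissible and contains every argument it defends. -/
def Complete (F : BSAF α) (E : Set α) : Prop :=
  F.Admissible E ∧ ∀ a ∈ F.A, F.Defends E a → a ∈ E

/-- Grounded: ⊆-minimal complete. -/
def Grounded (F : BSAF α) (E : Set α) : Prop :=
  F.Complete E ∧ ∀ E', F.Complete E' → E' ⊆ E → E' = E

/-- Preferred: ⊆-maximal admissible. -/
def Preferred (F : BSAF α) (E : Set α) : Prop :=
  F.Admissible E ∧ ∀ E', F.Admissible E' → E ⊆ E' → E' = E

/-- Stable: admissible and attacks every outside argument. -/
def Stable (F : BSAF α) (E : Set α) : Prop :=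
  F.Admissible E ∧ ∀ x ∈ F.A \ E, ∃ T, (T, x) ∈ F.R ∧ T ⊆ E

end BSAF


namespace BSAF

lemma incl_mono {F : BSAF α} {E E' : Set α} (hEE : E ⊆ E') {a : α}
    (ha : F.InCl E a) : F.InCl E' a := by
  induction ha with
  | base h => exact .base (hEE h)
  | step hs _ ih => exact .step hs ih

lemma subset_cl (F : BSAF α) (E : Set α) : E ⊆ F.cl E := fun _ ha => .base ha

lemma cl_subset_of_closed {F : BSAF α} {E C : Set α} (hC : F.Closed C)
    (hEC : E ⊆ C) : F.cl E ⊆ C := by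
  intro a ha
  have : F.InCl C a := incl_mono hEC ha
  rw [← hC]; exact this

lemma incl_mk (F : BSAF α) (A' : Set α) (R' : Set (Set α × α)) (E : Set α) (a : α) :
    (BSAF.mk A' R' F.S).InCl E a ↔ F.InCl E a := by
  constructor <;> intro hI <;> induction hI with
  | base h => exact .base h
  | step hs _ ih => exact .step hs ih

lemma cl_mk (F : BSAF α) (A' : Set α) (R' : Set (Set α × α)) (E : Set α) :
    (BSAF.mk A' R' F.S).cl E = F.cl E := by
  ext a; exact incl_mk F A' R' E a

lemma closed_mk (F : BSAF α) (A' : Set α) (R' : Set (Set α × α)) (E : Set α) :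
    (BSAF.mk A' R' F.S).Closed E ↔ F.Closed E := by
  unfold Closed; rw [cl_mk]

lemma exists_attack_iff (F : BSAF α) {T : Set α} {h : α} (hTh : (T, h) ∈ F.R)
    {C : Set α} (hC : F.Closed C) (x : α) :
    (∃ U, (U, x) ∈ (F.R \ {(T, h)}) ∪ {(F.cl T, h)} ∧ U ⊆ C) ↔
      (∃ U, (U, x) ∈ F.R ∧ U ⊆ C) := by
  constructor
  · rintro ⟨U, hU | hU, hUC⟩
    · exact ⟨U, hU.1, hUC⟩
    · simp only [Set.mem_singleton_iff, Prod.mk.injEq] at hU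
      obtain ⟨hU1, hU2⟩ := hU
      exact ⟨T, hU2 ▸ hTh, fun t ht => hUC (hU1 ▸ subset_cl F T ht)⟩
  · rintro ⟨U, hU, hUC⟩
    by_cases hUx : (U, x) = (T, h)
    · simp only [Prod.mk.injEq] at hUx
      obtain ⟨hU1, hU2⟩ := hUx
      exact ⟨F.cl T, Or.inr (by simp [hU2]),
        cl_subset_of_closed hC (hU1 ▸ hUC)⟩
    · exact ⟨U, Or.inl ⟨hU, hUx⟩, hUC⟩

end BSAF

/-- Closing a single attack preserves the stable extensions. -/
theorem BSAF.closeAttack_stable (F : BSAF α) (hfin : F.A.Finite)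
    (T : Set α) (h : α) (hTh : (T, h) ∈ F.R) :
    ∀ E : Set α, F.Stable E ↔
      (BSAF.mk F.A ((F.R \ {(T, h)}) ∪ {(F.cl T, h)}) F.S).Stable E := by
  intro E
  set F' : BSAF α := BSAF.mk F.A ((F.R \ {(T, h)}) ∪ {(F.cl T, h)}) F.S with hF'
  have hS : F'.S = F.S := rfl
  have hA : F'.A = F.A := rfl
  have hclosed : ∀ C : Set α, F'.Closed C ↔ F.Closed C :=
    fun C => closed_mk F F.A _ C
  have hex : ∀ {C : Set α}, F.Closed C → ∀ x,
      ((∃ U, (U, x) ∈ F'.R ∧ U ⊆ C) ↔ (∃ U, (U, x) ∈ F.R ∧ U ⊆ C)) :=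
    fun {C} hC x => exists_attack_iff F hTh hC x
  have hatt : ∀ {E' : Set α}, F.Closed E' → ∀ D, (F.Attacks E' D ↔ F'.Attacks E' D) := by
    intro E' hE' D
    constructor
    · rintro ⟨U, d, hU, hUE, hdD⟩
      obtain ⟨U', hU', hU'E⟩ := (hex hE' d).mpr ⟨U, hU, hUE⟩
      exact ⟨U', d, hU', hU'E, hdD⟩
    · rintro ⟨U, d, hU, hUE, hdD⟩
      obtain ⟨U', hU', hU'E⟩ := (hex hE' d).mp ⟨U, hU, hUE⟩
      exact ⟨U', d, hU', hU'E, hdD⟩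
  have hadm : F.Admissible E ↔ F'.Admissible E := by
    constructor
    · rintro ⟨hEA, hcf, hcl, hdef⟩
      refine ⟨hEA, ?_, (hclosed E).mpr hcl, ?_⟩
      · rintro ⟨U, a, hU, hUE, haE⟩
        obtain ⟨U', hU', hU'E⟩ := (hex hcl a).mp ⟨U, hU, hUE⟩
        exact hcf ⟨U', a, hU', hU'E, haE⟩
      · intro a haE D hDA hDcl hattD
        have hDcl' := (hclosed D).mp hDcl
        obtain ⟨U, hU, hUD⟩ := hattD
        have := hdef a haE D hDA hDcl' ((hex hDcl' a).mp ⟨U, hU, hUD⟩)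
        exact (hatt hcl D).mp this
    · rintro ⟨hEA, hcf, hcl, hdef⟩
      have hclF := (hclosed E).mp hcl
      refine ⟨hEA, ?_, hclF, ?_⟩
      · rintro ⟨U, a, hU, hUE, haE⟩
        obtain ⟨U', hU', hU'E⟩ := (hex hclF a).mpr ⟨U, hU, hUE⟩
        exact hcf ⟨U', a, hU', hU'E, haE⟩
      · intro a haE D hDA hDcl hattD
        have hDcl' := (hclosed D).mpr hDcl
        obtain ⟨U, hU, hUD⟩ := hattD
        have := hdef a haE D hDA hDcl' ((hex hDcl a).mpr ⟨U, hU, hUD⟩)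
        exact (hatt hclF D).mpr this
  constructor
  · rintro ⟨hadmE, hout⟩
    have hclF := hadmE.2.2.1
    refine ⟨hadm.mp hadmE, ?_⟩
    intro x hx
    exact (hex hclF x).mpr (hout x hx)
  · rintro ⟨hadmE, hout⟩
    have hadmF := hadm.mpr hadmE
    have hclF := hadmF.2.2.1
    refine ⟨hadmF, ?_⟩
    intro x hx
    exact (hex hclF x).mp (hout x hx)
end

section
/- Attack splitting theorem for admissible semantics: Let (F₁,F₂,R₃) be an attack splitting of a BSAF F with closed negative links R₃ᶜ, and F₂* = mod^{E₁}_{R₃ᶜ}(F₂^{E₁}). Then (1) if E₁ ∈ adm(F₁) and E₂ ∈ adm(F₂*), then E₁ ∪ E₂ ∈ adm(F); and (2) if E ∈ adm(F), then E ∩ A₁ ∈ adm(F₁) and E ∩ A₂ ∈ adm(F₂*). -/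
variable {α : Type*}

namespace BSAF

/-- All links of `G` stay within its argument set. -/
def WithinA (G : BSAF α) : Prop :=
  (∀ p ∈ G.R, p.1 ⊆ G.A ∧ p.2 ∈ G.A) ∧ (∀ p ∈ G.S, p.1 ⊆ G.A ∧ p.2 ∈ G.A)

/-- `(F₁, F₂, R₃)` is an attack splitting of `F`. -/
def IsAttackSplitting (F F₁ F₂ : BSAF α) (R₃ : Set (Set α × α)) : Prop :=
  F₁.WithinA ∧ F₂.WithinA ∧
  F₁.A ∩ F₂.A = ∅ ∧ F.A = F₁.A ∪ F₂.A ∧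
  F.S = F₁.S ∪ F₂.S ∧
  F.R = F₁.R ∪ F₂.R ∪ R₃ ∧
  ∀ p ∈ R₃, (p.1 ∩ F₁.A).Nonempty ∧ p.1 ⊆ F.A ∧ p.2 ∈ F₂.A

/-- The closed negative links `R₃ᶜ = {(cl(T), h) | (T, h) ∈ R₃}`. -/
def closedLinks (F : BSAF α) (R₃ : Set (Set α × α)) : Set (Set α × α) :=
  {p | ∃ T h, (T, h) ∈ R₃ ∧ p = (F.cl T, h)}

/-- The arguments attacked by `E` via the attack relation `Rs`. -/
def attackedBy (Rs : Set (Set α × α)) (E : Set α) : Set α :=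
  {a | ∃ T, (T, a) ∈ Rs ∧ T ⊆ E}

/-- The `(E₁, R₃ᶜ)`-reduct of `F₂`. -/
def Rreduct (F F₁ F₂ : BSAF α) (R₃ : Set (Set α × α)) (E₁ : Set α) : BSAF α where
  A := F₂.A
  R := F₂.R ∪ {p | ∃ T h, (T, h) ∈ F.closedLinks R₃ ∧
        T ∩ attackedBy (F₁.R ∪ F.closedLinks R₃) E₁ = ∅ ∧
        T ∩ F₁.A ⊆ E₁ ∧ p = (T ∩ F₂.A, h)}
  S := F₂.S

/-- The undecided links in `R₃ᶜ` w.r.t. `E₁`. -/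
def undecidedLinks (F F₁ : BSAF α) (R₃ : Set (Set α × α)) (E₁ : Set α) : Set (Set α × α) :=
  {p | p ∈ F.closedLinks R₃ ∧
    p.1 ∩ attackedBy (F₁.R ∪ F.closedLinks R₃) E₁ = ∅ ∧ ¬ p.1 ∩ F₁.A ⊆ E₁}

/-- The modification `F₂* = mod^{E₁}_{R₃ᶜ}(F₂^{E₁})`, with fresh self-attacker `s₀`. -/
def modification (F F₁ F₂ : BSAF α) (R₃ : Set (Set α × α)) (E₁ : Set α) (s₀ : α) : BSAF α where
  A := F₂.A ∪ {s₀}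
  R := (F.Rreduct F₁ F₂ R₃ E₁).R ∪ {({s₀}, s₀)} ∪
       {p | ∃ T h, (T, h) ∈ F.undecidedLinks F₁ R₃ E₁ ∧ p = ((T ∩ F₂.A) ∪ {s₀}, h)}
  S := F₂.S

end BSAF

/-!
Both directions translate attacks between `F` and `F₂*` along the splitting. An attack of `F`
landing in `A₁` is an attack of `F₁`. One landing in `A₂` is an attack of `F₂` or comes from some
`(T, h) ∈ R₃`; then either `E₁` attacks a member of `cl T` (in `F`, since each link of `R₃ᶜ` is
backed by a link of `R₃` with a smaller tail), or the link survives in `F₂*` as `(cl T ∩ A₂, h)`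
when `cl T ∩ A₁ ⊆ E₁` and as `(cl T ∩ A₂ ∪ {*₀}, h)` otherwise. Conversely a reduct link
`(cl T ∩ A₂, h)` is backed by `(T, h) ∈ R₃` with `T ⊆ E₁ ∪ (cl T ∩ A₂)`. The self-attacker `*₀`
lets undecided links attack while keeping them out of reach of an admissible `E₂`, which cannot
contain `*₀`. For (2), since `E` is closed and conflict-free, every `R₃`-attack from `E` becomes a
reduct link with respect to `E ∩ A₁`.
-/

open Set

namespace BSAF

section Closure

variable {F G : BSAF α} {E T : Set α} {a : α}

theorem InCl.mono_S (hS : F.S ⊆ G.S) (h : F.InCl E a) : G.InCl E a := by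
  induction h with
  | base ha => exact .base ha
  | step hp _ ih => exact .step (hS hp) ih

theorem cl_subset_cl_of_S_subset (hS : F.S ⊆ G.S) : F.cl E ⊆ G.cl E :=
  fun _ h => InCl.mono_S hS h

theorem subset_cl_s10 : E ⊆ F.cl E := fun _ => .base

theorem cl_subset_of_forall (hE : ∀ p ∈ F.S, p.1 ⊆ E → p.2 ∈ E) (hT : T ⊆ E) :
    F.cl T ⊆ E := by
  intro a (h : F.InCl T a)
  induction h with
  | base ha => exact hT ha
  | step hp _ ih => exact hE _ hp ih

theorem closed_iff : F.Closed E ↔ ∀ p ∈ F.S, p.1 ⊆ E → p.2 ∈ E := by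
  refine ⟨fun hE p hp hpE => ?_, fun hE => (cl_subset_of_forall hE subset_rfl).antisymm subset_cl_s10⟩
  rw [← hE]
  exact InCl.step hp fun _ ht => .base (hpE ht)

theorem Closed.cl_subset (hE : F.Closed E) (hT : T ⊆ E) : F.cl T ⊆ E :=
  cl_subset_of_forall (closed_iff.mp hE) hT

theorem closed_cl : F.Closed (F.cl E) :=
  closed_iff.mpr fun _ hp hpE => InCl.step hp hpE

theorem cl_subset_A (hS : ∀ p ∈ F.S, p.2 ∈ F.A) (hE : E ⊆ F.A) : F.cl E ⊆ F.A := by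
  intro a (h : F.InCl E a)
  induction h with
  | base ha => exact hE ha
  | step hp _ _ => exact hS _ hp

theorem cl_inter_subset (hG : ∀ p ∈ F.S, p.2 ∈ G.A → p ∈ G.S ∧ p.1 ⊆ G.A) :
    F.cl E ∩ G.A ⊆ G.cl (E ∩ G.A) := by
  rintro a ⟨h, ha⟩
  induction h with
  | base hE => exact .base ⟨hE, ha⟩
  | step hp _ ih =>
    obtain ⟨hpG, hTG⟩ := hG _ hp ha
    exact InCl.step hpG fun t ht => ih t ht (hTG ht)

end Closure

section Attacks

variable {F : BSAF α} {Rs Rs' : Set (Set α × α)} {E E' : Set α}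

theorem attackedBy_mono (hR : Rs ⊆ Rs') (hE : E ⊆ E') : attackedBy Rs E ⊆ attackedBy Rs' E' :=
  fun _ ⟨T, hT, hTE⟩ => ⟨T, hR hT, hTE.trans hE⟩

theorem conflictFree_iff : F.ConflictFree E ↔ E ∩ attackedBy F.R E = ∅ := by
  simp only [ConflictFree, attackedBy, eq_empty_iff_forall_notMem, mem_inter_iff, mem_ofPred_eq]
  aesop

theorem mem_closedLinks_iff {R₃ : Set (Set α × α)} {Tc : Set α} {b : α} :
    (Tc, b) ∈ F.closedLinks R₃ ↔ ∃ U, (U, b) ∈ R₃ ∧ F.cl U = Tc := by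
  simp [closedLinks, eq_comm]

end Attacks

section Modification

variable {F F₁ F₂ : BSAF α} {R₃ : Set (Set α × α)} {E₁ E T : Set α} {b s₀ : α}

theorem Rreduct_R_subset_modification_R :
    (F.Rreduct F₁ F₂ R₃ E₁).R ⊆ (F.modification F₁ F₂ R₃ E₁ s₀).R :=
  subset_union_left.trans subset_union_left

theorem mem_Rreduct_R_of_notMem (hTb : (T, b) ∈ (F.modification F₁ F₂ R₃ E₁ s₀).R)
    (hs₀ : s₀ ∉ T) : (T, b) ∈ (F.Rreduct F₁ F₂ R₃ E₁).R := by
  rcases hTb with (hred | hself) | ⟨Tc, b, -, ⟨⟩⟩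
  · exact hred
  · cases hself
    exact absurd rfl hs₀
  · exact absurd (.inr rfl) hs₀

theorem modification_closed_iff :
    (F.modification F₁ F₂ R₃ E₁ s₀).Closed E ↔ F₂.Closed E := by
  rw [closed_iff, closed_iff]
  rfl

theorem subset_A_of_conflictFree_modification
    (hE : (F.modification F₁ F₂ R₃ E₁ s₀).ConflictFree E)
    (hEA : E ⊆ (F.modification F₁ F₂ R₃ E₁ s₀).A) : E ⊆ F₂.A := by
  intro x hx
  refine (hEA hx).resolve_right fun hx₀ => ?_
  rw [mem_singleton_iff] at hx₀
  subst hx₀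
  exact hE ⟨{x}, x, Or.inl (Or.inr rfl), singleton_subset_iff.mpr hx, hx⟩

end Modification

namespace IsAttackSplitting

variable {F F₁ F₂ : BSAF α} {R₃ : Set (Set α × α)} {E₁ E₂ E B D T Tc : Set α} {a b s₀ : α}

theorem A_eq (h : F.IsAttackSplitting F₁ F₂ R₃) : F.A = F₁.A ∪ F₂.A := h.2.2.2.1

theorem S_eq (h : F.IsAttackSplitting F₁ F₂ R₃) : F.S = F₁.S ∪ F₂.S := h.2.2.2.2.1

theorem R_eq (h : F.IsAttackSplitting F₁ F₂ R₃) : F.R = F₁.R ∪ F₂.R ∪ R₃ := h.2.2.2.2.2.1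

theorem R₁_within (h : F.IsAttackSplitting F₁ F₂ R₃) (hT : (T, a) ∈ F₁.R) :
    T ⊆ F₁.A ∧ a ∈ F₁.A :=
  h.1.1 _ hT

theorem R₂_within (h : F.IsAttackSplitting F₁ F₂ R₃) (hT : (T, a) ∈ F₂.R) :
    T ⊆ F₂.A ∧ a ∈ F₂.A :=
  h.2.1.1 _ hT

theorem R₃_within (h : F.IsAttackSplitting F₁ F₂ R₃) (hT : (T, a) ∈ R₃) :
    T ⊆ F.A ∧ a ∈ F₂.A :=
  (h.2.2.2.2.2.2 _ hT).2

theorem S₁_within (h : F.IsAttackSplitting F₁ F₂ R₃) {p : Set α × α} (hp : p ∈ F₁.S) :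
    p.1 ⊆ F₁.A ∧ p.2 ∈ F₁.A :=
  h.1.2 p hp

theorem S₂_within (h : F.IsAttackSplitting F₁ F₂ R₃) {p : Set α × α} (hp : p ∈ F₂.S) :
    p.1 ⊆ F₂.A ∧ p.2 ∈ F₂.A :=
  h.2.1.2 p hp

theorem A₁_subset (h : F.IsAttackSplitting F₁ F₂ R₃) : F₁.A ⊆ F.A :=
  h.A_eq ▸ subset_union_left

theorem A₂_subset (h : F.IsAttackSplitting F₁ F₂ R₃) : F₂.A ⊆ F.A :=
  h.A_eq ▸ subset_union_right

theorem notMem_A₂ (h : F.IsAttackSplitting F₁ F₂ R₃) (ha : a ∈ F₁.A) : a ∉ F₂.A :=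
  fun ha₂ => eq_empty_iff_forall_notMem.mp h.2.2.1 a ⟨ha, ha₂⟩

theorem mem_A₂_of_notMem_A₁ (h : F.IsAttackSplitting F₁ F₂ R₃) (ha : a ∈ F.A)
    (ha₁ : a ∉ F₁.A) : a ∈ F₂.A :=
  (h.A_eq ▸ ha : a ∈ F₁.A ∪ F₂.A).resolve_left ha₁

theorem inter_A₁_eq_empty (h : F.IsAttackSplitting F₁ F₂ R₃) (hT : T ⊆ F₂.A) :
    T ∩ F₁.A = ∅ :=
  eq_empty_iff_forall_notMem.mpr fun _ hx => h.notMem_A₂ hx.2 (hT hx.1)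

theorem inter_A₂_eq_empty (h : F.IsAttackSplitting F₁ F₂ R₃) (hT : T ⊆ F₁.A) :
    T ∩ F₂.A = ∅ :=
  eq_empty_iff_forall_notMem.mpr fun _ hx => h.notMem_A₂ (hT hx.1) hx.2

theorem inter_A₁_subset_of_subset_union (h : F.IsAttackSplitting F₁ F₂ R₃)
    (hE₂ : E₂ ⊆ F₂.A) (hT : T ⊆ E₁ ∪ E₂) : T ∩ F₁.A ⊆ E₁ :=
  fun _ hx => (hT hx.1).resolve_right fun hx₂ => h.notMem_A₂ hx.2 (hE₂ hx₂)

theorem inter_A₂_subset_of_subset_union (h : F.IsAttackSplitting F₁ F₂ R₃)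
    (hE₁ : E₁ ⊆ F₁.A) (hT : T ⊆ E₁ ∪ E₂) : T ∩ F₂.A ⊆ E₂ :=
  fun _ hx => (hT hx.1).resolve_left fun hx₁ => h.notMem_A₂ (hE₁ hx₁) hx.2

theorem R₁_subset (h : F.IsAttackSplitting F₁ F₂ R₃) : F₁.R ⊆ F.R :=
  h.R_eq ▸ subset_union_left.trans subset_union_left

theorem R₂_subset (h : F.IsAttackSplitting F₁ F₂ R₃) : F₂.R ⊆ F.R :=
  h.R_eq ▸ subset_union_right.trans subset_union_left

theorem R₃_subset (h : F.IsAttackSplitting F₁ F₂ R₃) : R₃ ⊆ F.R :=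
  h.R_eq ▸ subset_union_right

theorem mem_R₁_of_mem_A₁ (h : F.IsAttackSplitting F₁ F₂ R₃) (hT : (T, a) ∈ F.R)
    (ha : a ∈ F₁.A) : (T, a) ∈ F₁.R := by
  rw [h.R_eq] at hT
  rcases hT with (hT | hT) | hT
  · exact hT
  · exact absurd (h.R₂_within hT).2 (h.notMem_A₂ ha)
  · exact absurd (h.R₃_within hT).2 (h.notMem_A₂ ha)

theorem mem_R₂_or_R₃_of_mem_A₂ (h : F.IsAttackSplitting F₁ F₂ R₃) (hT : (T, a) ∈ F.R)
    (ha : a ∈ F₂.A) : (T, a) ∈ F₂.R ∨ (T, a) ∈ R₃ := by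
  rw [h.R_eq] at hT
  rcases hT with (hT | hT) | hT
  · exact absurd ha (h.notMem_A₂ (h.R₁_within hT).2)
  · exact .inl hT
  · exact .inr hT

theorem S₁_subset (h : F.IsAttackSplitting F₁ F₂ R₃) : F₁.S ⊆ F.S :=
  h.S_eq ▸ subset_union_left

theorem S₂_subset (h : F.IsAttackSplitting F₁ F₂ R₃) : F₂.S ⊆ F.S :=
  h.S_eq ▸ subset_union_right

theorem cl_subset_A (h : F.IsAttackSplitting F₁ F₂ R₃) (hE : E ⊆ F.A) : F.cl E ⊆ F.A := by
  refine BSAF.cl_subset_A (fun p hp => ?_) hE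
  rw [h.S_eq] at hp
  rcases hp with hp | hp
  · exact h.A₁_subset (h.S₁_within hp).2
  · exact h.A₂_subset (h.S₂_within hp).2

theorem cl_inter_A₁ (h : F.IsAttackSplitting F₁ F₂ R₃) : F.cl E ∩ F₁.A ⊆ F₁.cl (E ∩ F₁.A) := by
  refine cl_inter_subset fun p hp hp₁ => ?_
  rw [h.S_eq] at hp
  rcases hp with hp | hp
  · exact ⟨hp, (h.S₁_within hp).1⟩
  · exact absurd (h.S₂_within hp).2 (h.notMem_A₂ hp₁)

theorem cl_inter_A₂ (h : F.IsAttackSplitting F₁ F₂ R₃) : F.cl E ∩ F₂.A ⊆ F₂.cl (E ∩ F₂.A) := by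
  refine cl_inter_subset fun p hp hp₂ => ?_
  rw [h.S_eq] at hp
  rcases hp with hp | hp
  · exact absurd hp₂ (h.notMem_A₂ (h.S₁_within hp).2)
  · exact ⟨hp, (h.S₂_within hp).1⟩

theorem cl_inter_A₁_subset (h : F.IsAttackSplitting F₁ F₂ R₃) (hE : F.Closed E)
    (hD : D ∩ F₁.A ⊆ E) : F.cl D ∩ F₁.A ⊆ E :=
  h.cl_inter_A₁.trans ((cl_subset_cl_of_S_subset h.S₁_subset).trans (hE.cl_subset hD))

theorem cl_inter_A₂_subset (h : F.IsAttackSplitting F₁ F₂ R₃) (hE : F.Closed E)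
    (hD : D ∩ F₂.A ⊆ E) : F.cl D ∩ F₂.A ⊆ E :=
  h.cl_inter_A₂.trans ((cl_subset_cl_of_S_subset h.S₂_subset).trans (hE.cl_subset hD))

theorem closed_inter_A₁ (h : F.IsAttackSplitting F₁ F₂ R₃) (hD : F.Closed D) :
    F₁.Closed (D ∩ F₁.A) :=
  closed_iff.mpr fun p hp hpD =>
    ⟨closed_iff.mp hD p (h.S₁_subset hp) (hpD.trans inter_subset_left), (h.S₁_within hp).2⟩

theorem closed_inter_A₂ (h : F.IsAttackSplitting F₁ F₂ R₃) (hD : F.Closed D) :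
    F₂.Closed (D ∩ F₂.A) :=
  closed_iff.mpr fun p hp hpD =>
    ⟨closed_iff.mp hD p (h.S₂_subset hp) (hpD.trans inter_subset_left), (h.S₂_within hp).2⟩

theorem closed_union (h : F.IsAttackSplitting F₁ F₂ R₃) (hE₁ : F₁.Closed E₁)
    (hE₂ : F₂.Closed E₂) (hE₁A : E₁ ⊆ F₁.A) (hE₂A : E₂ ⊆ F₂.A) : F.Closed (E₁ ∪ E₂) := by
  refine closed_iff.mpr fun p hp hpE => ?_
  rw [h.S_eq] at hp
  rcases hp with hp | hp
  · have hp₁ := h.S₁_within hp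
    refine .inl (closed_iff.mp hE₁ p hp fun x hx => ?_)
    exact h.inter_A₁_subset_of_subset_union hE₂A hpE ⟨hx, hp₁.1 hx⟩
  · have hp₂ := h.S₂_within hp
    refine .inr (closed_iff.mp hE₂ p hp fun x hx => ?_)
    exact h.inter_A₂_subset_of_subset_union hE₁A hpE ⟨hx, hp₂.1 hx⟩

theorem closedLinks_head_mem (h : F.IsAttackSplitting F₁ F₂ R₃)
    (hc : (Tc, b) ∈ F.closedLinks R₃) : b ∈ F₂.A := by
  obtain ⟨U, hU, -⟩ := mem_closedLinks_iff.mp hc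
  exact (h.R₃_within hU).2

theorem closed_attacker_of_mem_closedLinks (h : F.IsAttackSplitting F₁ F₂ R₃)
    (hc : (Tc, b) ∈ F.closedLinks R₃) :
    Tc ⊆ F.A ∧ F.Closed Tc ∧ ∃ U, (U, b) ∈ F.R ∧ U ⊆ Tc := by
  obtain ⟨U, hU, rfl⟩ := mem_closedLinks_iff.mp hc
  exact ⟨h.cl_subset_A (h.R₃_within hU).1, closed_cl, U, h.R₃_subset hU, subset_cl_s10⟩

theorem attackedBy_closedLinks_subset (h : F.IsAttackSplitting F₁ F₂ R₃) :
    attackedBy (F₁.R ∪ F.closedLinks R₃) E ⊆ attackedBy F.R E := by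
  rintro b ⟨T, hT | hT, hTE⟩
  · exact ⟨T, h.R₁_subset hT, hTE⟩
  · obtain ⟨U, hUb, hUT⟩ := (h.closed_attacker_of_mem_closedLinks hT).2.2
    exact ⟨U, hUb, hUT.trans hTE⟩


theorem inter_attackedBy_eq_empty (h : F.IsAttackSplitting F₁ F₂ R₃) (hE₁A : E₁ ⊆ F₁.A)
    (hE₁ : F₁.ConflictFree E₁) : E₁ ∩ attackedBy (F₁.R ∪ F.closedLinks R₃) E₁ = ∅ := by
  refine eq_empty_iff_forall_notMem.mpr ?_
  rintro b ⟨hb, T, hT | hT, hTE⟩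
  · exact hE₁ ⟨T, b, hT, hTE, hb⟩
  · exact h.notMem_A₂ (hE₁A hb) (h.closedLinks_head_mem hT)

theorem empty_mem_Rreduct_R (h : F.IsAttackSplitting F₁ F₂ R₃) (hE₁A : E₁ ⊆ F₁.A)
    (hE₁ : F₁.ConflictFree E₁) (hb : b ∈ attackedBy (F₁.R ∪ F.closedLinks R₃) E₁)
    (hb₂ : b ∈ F₂.A) : (∅, b) ∈ (F.Rreduct F₁ F₂ R₃ E₁).R := by
  obtain ⟨T, hT | hT, hTE⟩ := hb
  · exact absurd hb₂ (h.notMem_A₂ (h.R₁_within hT).2)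
  · refine .inr ⟨T, b, hT, ?_, inter_subset_left.trans hTE, ?_⟩
    · exact subset_empty_iff.mp
        ((inter_subset_inter_left _ hTE).trans (h.inter_attackedBy_eq_empty hE₁A hE₁).subset)
    · rw [h.inter_A₂_eq_empty (hTE.trans hE₁A)]

theorem exists_R_of_mem_Rreduct_R (h : F.IsAttackSplitting F₁ F₂ R₃)
    (hTb : (T, b) ∈ (F.Rreduct F₁ F₂ R₃ E₁).R) :
    b ∈ F₂.A ∧ ∃ V, (V, b) ∈ F.R ∧ V ⊆ E₁ ∪ T := by
  rcases hTb with hT₂ | ⟨Tc, b, hc, -, hinc, ⟨⟩⟩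
  · exact ⟨(h.R₂_within hT₂).2, T, h.R₂_subset hT₂, subset_union_right⟩
  · obtain ⟨U, hU, rfl⟩ := mem_closedLinks_iff.mp hc
    refine ⟨(h.R₃_within hU).2, U, h.R₃_subset hU, fun x hx => ?_⟩
    have hx' : x ∈ F.cl U := subset_cl_s10 hx
    by_cases hx₁ : x ∈ F₁.A
    · exact .inl (hinc ⟨hx', hx₁⟩)
    · exact .inr ⟨hx', h.mem_A₂_of_notMem_A₁ ((h.R₃_within hU).1 hx) hx₁⟩

theorem conflictFree_union (h : F.IsAttackSplitting F₁ F₂ R₃) (hE₁A : E₁ ⊆ F₁.A)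
    (hE₁ : F₁.ConflictFree E₁) (hE₂A : E₂ ⊆ F₂.A)
    (hE₂ : (F.modification F₁ F₂ R₃ E₁ s₀).ConflictFree E₂) (hcl : F.Closed (E₁ ∪ E₂)) :
    F.ConflictFree (E₁ ∪ E₂) := by
  have hE₂red : ∀ T b, (T, b) ∈ (F.Rreduct F₁ F₂ R₃ E₁).R → T ⊆ E₂ → b ∉ E₂ :=
    fun T b hTb hT hb => hE₂ ⟨T, b, Rreduct_R_subset_modification_R hTb, hT, hb⟩
  have hplus : (E₁ ∪ E₂) ∩ attackedBy (F₁.R ∪ F.closedLinks R₃) E₁ = ∅ := by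
    refine eq_empty_iff_forall_notMem.mpr ?_
    rintro b ⟨hb₁ | hb₂, hb⟩
    · exact (h.inter_attackedBy_eq_empty hE₁A hE₁).subset ⟨hb₁, hb⟩
    · exact hE₂red ∅ b (h.empty_mem_Rreduct_R hE₁A hE₁ hb (hE₂A hb₂)) (empty_subset _) hb₂
  rintro ⟨T, b, hTb, hT, hb₁ | hb₂⟩
  · have hT₁ := h.mem_R₁_of_mem_A₁ hTb (hE₁A hb₁)
    exact hE₁ ⟨T, b, hT₁, fun x hx =>
      h.inter_A₁_subset_of_subset_union hE₂A hT ⟨hx, (h.R₁_within hT₁).1 hx⟩, hb₁⟩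
  rcases h.mem_R₂_or_R₃_of_mem_A₂ hTb (hE₂A hb₂) with hT₂ | hT₃
  · exact hE₂red T b (.inl hT₂) (fun x hx =>
      h.inter_A₂_subset_of_subset_union hE₁A hT ⟨hx, (h.R₂_within hT₂).1 hx⟩) hb₂
  · have hclT : F.cl T ⊆ E₁ ∪ E₂ := hcl.cl_subset hT
    refine hE₂red _ b (.inr ⟨F.cl T, b, ⟨T, b, hT₃, rfl⟩, ?_,
      h.inter_A₁_subset_of_subset_union hE₂A hclT, rfl⟩)
      (h.inter_A₂_subset_of_subset_union hE₁A hclT) hb₂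
    exact subset_empty_iff.mp ((inter_subset_inter_left _ hclT).trans hplus.subset)

theorem defends_union_of_mem_left (h : F.IsAttackSplitting F₁ F₂ R₃)
    (hE₁ : F₁.Admissible E₁) (ha : a ∈ E₁) : F.Defends (E₁ ∪ E₂) a := by
  rintro D - hD ⟨T, hTa, hTD⟩
  have hT₁ := h.mem_R₁_of_mem_A₁ hTa (hE₁.1 ha)
  obtain ⟨T', b, hT'b, hT'E, hbD⟩ := hE₁.2.2.2 a ha (D ∩ F₁.A) inter_subset_right
    (h.closed_inter_A₁ hD) ⟨T, hT₁, subset_inter hTD (h.R₁_within hT₁).1⟩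
  exact ⟨T', b, h.R₁_subset hT'b, hT'E.trans subset_union_left, hbD.1⟩

theorem exists_modification_attack_or_attacks (h : F.IsAttackSplitting F₁ F₂ R₃)
    (hD : F.Closed D) (hTa : (T, a) ∈ F.R) (hTD : T ⊆ D) (ha : a ∈ F₂.A) :
    (∃ T₂, (T₂, a) ∈ (F.modification F₁ F₂ R₃ E₁ s₀).R ∧ T₂ ⊆ D ∩ F₂.A ∪ {s₀}) ∨
      F.Attacks E₁ D := by
  rcases h.mem_R₂_or_R₃_of_mem_A₂ hTa ha with hT₂ | hT₃
  · exact .inl ⟨T, Or.inl (Or.inl (Or.inl hT₂)),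
      fun x hx => .inl ⟨hTD hx, (h.R₂_within hT₂).1 hx⟩⟩
  have hc : (F.cl T, a) ∈ F.closedLinks R₃ := ⟨T, a, hT₃, rfl⟩
  have hclD : F.cl T ∩ F₂.A ∪ {s₀} ⊆ D ∩ F₂.A ∪ {s₀} :=
    union_subset_union_left _ (inter_subset_inter_left _ (hD.cl_subset hTD))
  by_cases hdec : F.cl T ∩ attackedBy (F₁.R ∪ F.closedLinks R₃) E₁ = ∅
  · by_cases hinc : F.cl T ∩ F₁.A ⊆ E₁
    · exact .inl ⟨F.cl T ∩ F₂.A, Or.inl (Or.inl (Or.inr ⟨_, _, hc, hdec, hinc, rfl⟩)),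
        subset_union_left.trans hclD⟩
    · exact .inl ⟨F.cl T ∩ F₂.A ∪ {s₀}, Or.inr ⟨_, _, ⟨hc, hdec, hinc⟩, rfl⟩, hclD⟩
  · obtain ⟨b, hbT, hb⟩ := nonempty_iff_ne_empty.mpr hdec
    obtain ⟨U, hU, hUE⟩ := h.attackedBy_closedLinks_subset hb
    exact .inr ⟨U, b, hU, hUE, hD.cl_subset hTD hbT⟩

theorem closed_modification_inter_A₂_union (h : F.IsAttackSplitting F₁ F₂ R₃)
    (hs₀ : s₀ ∉ F₂.A) (hD : F.Closed D) :
    (F.modification F₁ F₂ R₃ E₁ s₀).Closed (D ∩ F₂.A ∪ {s₀}) := by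
  rw [modification_closed_iff, closed_iff]
  intro p hp hpD
  refine .inl (closed_iff.mp (h.closed_inter_A₂ hD) p hp fun x hx => ?_)
  refine (hpD hx).resolve_right fun hx₀ => hs₀ ?_
  rw [mem_singleton_iff] at hx₀
  exact hx₀ ▸ (h.S₂_within hp).1 hx

theorem defends_union_of_mem_right (h : F.IsAttackSplitting F₁ F₂ R₃) (hs₀ : s₀ ∉ F₂.A)
    (hE₂A : E₂ ⊆ F₂.A) (hE₂ : (F.modification F₁ F₂ R₃ E₁ s₀).Admissible E₂) (ha : a ∈ E₂) :
    F.Defends (E₁ ∪ E₂) a := by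
  rintro D - hD ⟨T, hTa, hTD⟩
  rcases h.exists_modification_attack_or_attacks (E₁ := E₁) (s₀ := s₀) hD hTa hTD (hE₂A ha)
    with ⟨T₂, hT₂a, hT₂D⟩ | ⟨U, b, hU, hUE, hbD⟩
  · obtain ⟨T', b, hT'b, hT'E, hbD⟩ := hE₂.2.2.2 a ha _
      (union_subset_union_left _ inter_subset_right)
      (h.closed_modification_inter_A₂_union hs₀ hD) ⟨T₂, hT₂a, hT₂D⟩
    obtain ⟨hb₂, V, hV, hVE⟩ := h.exists_R_of_mem_Rreduct_R
      (mem_Rreduct_R_of_notMem hT'b fun hs => hs₀ (hE₂A (hT'E hs)))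
    refine ⟨V, b, hV, hVE.trans (union_subset_union_right _ hT'E), ?_⟩
    exact (hbD.resolve_right fun hb => hs₀ (mem_singleton_iff.mp hb ▸ hb₂)).1
  · exact ⟨U, b, hU, hUE.trans subset_union_left, hbD⟩

theorem admissible_union (h : F.IsAttackSplitting F₁ F₂ R₃) (hs₀ : s₀ ∉ F₂.A)
    (hE₁ : F₁.Admissible E₁) (hE₂ : (F.modification F₁ F₂ R₃ E₁ s₀).Admissible E₂) :
    F.Admissible (E₁ ∪ E₂) := by
  have hE₂A : E₂ ⊆ F₂.A := subset_A_of_conflictFree_modification hE₂.2.1 hE₂.1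
  have hcl : F.Closed (E₁ ∪ E₂) :=
    h.closed_union hE₁.2.2.1 (modification_closed_iff.mp hE₂.2.2.1) hE₁.1 hE₂A
  refine ⟨union_subset (hE₁.1.trans h.A₁_subset) (hE₂A.trans h.A₂_subset),
    h.conflictFree_union hE₁.1 hE₁.2.1 hE₂A hE₂.2.1 hcl, hcl, ?_⟩
  rintro a (ha | ha)
  · exact h.defends_union_of_mem_left hE₁ ha
  · exact h.defends_union_of_mem_right hs₀ hE₂A hE₂ ha

theorem admissible_inter_A₁ (h : F.IsAttackSplitting F₁ F₂ R₃) (hE : F.Admissible E) :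
    F₁.Admissible (E ∩ F₁.A) := by
  obtain ⟨-, hcf, hcl, hdef⟩ := hE
  refine ⟨inter_subset_right, fun ⟨T, b, hTb, hT, hb⟩ =>
    hcf ⟨T, b, h.R₁_subset hTb, hT.trans inter_subset_left, hb.1⟩, h.closed_inter_A₁ hcl, ?_⟩
  rintro a ⟨ha, -⟩ D hDA hD ⟨T, hTa, hTD⟩
  obtain ⟨T', b, hT'b, hT'E, hb⟩ := hdef a ha (F.cl D)
    (h.cl_subset_A (hDA.trans h.A₁_subset)) closed_cl ⟨T, h.R₁_subset hTa, hTD.trans subset_cl_s10⟩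
  by_cases hb₁ : b ∈ F₁.A
  · have hT'₁ := h.mem_R₁_of_mem_A₁ hT'b hb₁
    exact ⟨T', b, hT'₁, subset_inter hT'E (h.R₁_within hT'₁).1,
      hD.cl_subset inter_subset_left (h.cl_inter_A₁ ⟨hb, hb₁⟩)⟩
  · have hb₂ := h.mem_A₂_of_notMem_A₁ (h.cl_subset_A (hDA.trans h.A₁_subset) hb) hb₁
    have hbE : b ∈ E := h.cl_inter_A₂_subset hcl
      ((h.inter_A₂_eq_empty hDA).trans_subset (empty_subset _)) ⟨hb, hb₂⟩
    exact absurd ⟨T', b, hT'b, hT'E, hbE⟩ hcf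

theorem exists_Rreduct_attack (h : F.IsAttackSplitting F₁ F₂ R₃) (hcf : F.ConflictFree E)
    (hcl : F.Closed E) (hTb : (T, b) ∈ F.R) (hTE : T ⊆ E) (hb : b ∈ F₂.A) :
    ∃ V, (V, b) ∈ (F.Rreduct F₁ F₂ R₃ (E ∩ F₁.A)).R ∧ V ⊆ E ∩ F₂.A := by
  rcases h.mem_R₂_or_R₃_of_mem_A₂ hTb hb with hT₂ | hT₃
  · exact ⟨T, .inl hT₂, subset_inter hTE (h.R₂_within hT₂).1⟩
  have hclE : F.cl T ⊆ E := hcl.cl_subset hTE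
  refine ⟨F.cl T ∩ F₂.A, .inr ⟨_, _, ⟨T, b, hT₃, rfl⟩, ?_, inter_subset_inter_left _ hclE, rfl⟩,
    inter_subset_inter_left _ hclE⟩
  exact subset_empty_iff.mp (conflictFree_iff.mp hcf ▸ inter_subset_inter hclE
    (h.attackedBy_closedLinks_subset.trans (attackedBy_mono subset_rfl inter_subset_left)))

theorem inter_attackedBy_R₁_eq_empty (h : F.IsAttackSplitting F₁ F₂ R₃) (hcf : F.ConflictFree E)
    (hB : B ∩ F₁.A ⊆ E) : B ∩ attackedBy F₁.R (E ∩ F₁.A) = ∅ := by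
  refine eq_empty_iff_forall_notMem.mpr ?_
  rintro b ⟨hbB, T, hTb, hTE⟩
  exact hcf ⟨T, b, h.R₁_subset hTb, hTE.trans inter_subset_left, hB ⟨hbB, (h.R₁_within hTb).2⟩⟩

-- `F₂*` only sees the counterattacks of `E` that land in `A₂`; `hBE` excludes the others.
theorem modification_attacks_of_closed_attacker (h : F.IsAttackSplitting F₁ F₂ R₃)
    (hE : F.Admissible E) (ha : a ∈ E) (hBA : B ⊆ F.A) (hB : F.Closed B)
    (hUa : ∃ U, (U, a) ∈ F.R ∧ U ⊆ B) (hBD : B ∩ F₂.A ⊆ D)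
    (hBE : B ∩ attackedBy F₁.R (E ∩ F₁.A) = ∅) :
    (F.modification F₁ F₂ R₃ (E ∩ F₁.A) s₀).Attacks (E ∩ F₂.A) D := by
  obtain ⟨T, b, hTb, hTE, hbB⟩ := hE.2.2.2 a ha B hBA hB hUa
  by_cases hb₁ : b ∈ F₁.A
  · have hT₁ := h.mem_R₁_of_mem_A₁ hTb hb₁
    exact absurd hBE (nonempty_iff_ne_empty.mp
      ⟨b, hbB, T, hT₁, subset_inter hTE (h.R₁_within hT₁).1⟩)
  · have hb₂ := h.mem_A₂_of_notMem_A₁ (hBA hbB) hb₁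
    obtain ⟨V, hV, hVE⟩ := h.exists_Rreduct_attack hE.2.1 hE.2.2.1 hTb hTE hb₂
    exact ⟨V, b, Rreduct_R_subset_modification_R hV, hVE, hBD ⟨hbB, hb₂⟩⟩

theorem defends_modification_inter_A₂ (h : F.IsAttackSplitting F₁ F₂ R₃) (hs₀ : s₀ ∉ F₂.A)
    (hE : F.Admissible E) (ha : a ∈ E ∩ F₂.A) :
    (F.modification F₁ F₂ R₃ (E ∩ F₁.A) s₀).Defends (E ∩ F₂.A) a := by
  rintro D - hD ⟨T₂, hT₂a, hT₂D⟩
  rw [modification_closed_iff] at hD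
  rcases hT₂a with ((hT₂ | ⟨Tc, _, hc, -, hinc, ⟨⟩⟩) | hself) | ⟨Tc, _, ⟨hc, hdec, -⟩, ⟨⟩⟩
  · have hT₂A := (h.R₂_within hT₂).1
    refine h.modification_attacks_of_closed_attacker hE ha.1 (h.cl_subset_A (hT₂A.trans
      h.A₂_subset)) closed_cl ⟨T₂, h.R₂_subset hT₂, subset_cl_s10⟩ ?_
      (h.inter_attackedBy_R₁_eq_empty hE.2.1 ?_)
    · exact h.cl_inter_A₂.trans (hD.cl_subset (inter_subset_left.trans hT₂D))
    · exact h.cl_inter_A₁_subset hE.2.2.1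
        ((h.inter_A₁_eq_empty hT₂A).trans_subset (empty_subset _))
  · obtain ⟨hTcA, hTc, hUa⟩ := h.closed_attacker_of_mem_closedLinks hc
    exact h.modification_attacks_of_closed_attacker hE ha.1 hTcA hTc hUa hT₂D
      (h.inter_attackedBy_R₁_eq_empty hE.2.1 fun x hx => (hinc hx).1)
  · cases hself
    exact absurd ha.2 hs₀
  · obtain ⟨hTcA, hTc, hUa⟩ := h.closed_attacker_of_mem_closedLinks hc
    exact h.modification_attacks_of_closed_attacker hE ha.1 hTcA hTc hUa
      (subset_union_left.trans hT₂D) (subset_empty_iff.mp (hdec ▸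
        inter_subset_inter_right _ (attackedBy_mono subset_union_left subset_rfl)))

theorem admissible_modification_inter_A₂ (h : F.IsAttackSplitting F₁ F₂ R₃) (hs₀ : s₀ ∉ F₂.A)
    (hE : F.Admissible E) : (F.modification F₁ F₂ R₃ (E ∩ F₁.A) s₀).Admissible (E ∩ F₂.A) := by
  refine ⟨inter_subset_right.trans subset_union_left, ?_,
    modification_closed_iff.mpr (h.closed_inter_A₂ hE.2.2.1),
    fun a ha => h.defends_modification_inter_A₂ hs₀ hE ha⟩
  rintro ⟨T, b, hTb, hT, hb⟩
  obtain ⟨-, V, hV, hVE⟩ := h.exists_R_of_mem_Rreduct_R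
    (mem_Rreduct_R_of_notMem hTb fun hs => hs₀ (hT hs).2)
  exact hE.2.1 ⟨V, b, hV, hVE.trans (union_subset inter_subset_left
    (hT.trans inter_subset_left)), hb.1⟩

end IsAttackSplitting

end BSAF

theorem BSAF.attackSplitting_admissible_general (F F₁ F₂ : BSAF α) (R₃ : Set (Set α × α))
    (hsplit : F.IsAttackSplitting F₁ F₂ R₃)
    (s₀ : α) (hs₀ : s₀ ∉ F.A) :
    (∀ E₁ E₂ : Set α, F₁.Admissible E₁ →
      (F.modification F₁ F₂ R₃ E₁ s₀).Admissible E₂ → F.Admissible (E₁ ∪ E₂)) ∧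
    (∀ E : Set α, F.Admissible E →
      F₁.Admissible (E ∩ F₁.A) ∧
      (F.modification F₁ F₂ R₃ (E ∩ F₁.A) s₀).Admissible (E ∩ F₂.A)) := by
  have hs₀₂ : s₀ ∉ F₂.A := fun h => hs₀ (hsplit.A₂_subset h)
  exact ⟨fun _ _ hE₁ hE₂ => hsplit.admissible_union hs₀₂ hE₁ hE₂,
    fun _ hE => ⟨hsplit.admissible_inter_A₁ hE, hsplit.admissible_modification_inter_A₂ hs₀₂ hE⟩⟩

/-- Attack splitting theorem for admissible semantics. -/
theorem BSAF.attackSplitting_admissible (F F₁ F₂ : BSAF α) (R₃ : Set (Set α × α))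
    (hsplit : F.IsAttackSplitting F₁ F₂ R₃) (hfin : F.A.Finite)
    (s₀ : α) (hs₀ : s₀ ∉ F.A) :
    (∀ E₁ E₂ : Set α, F₁.Admissible E₁ →
      (F.modification F₁ F₂ R₃ E₁ s₀).Admissible E₂ → F.Admissible (E₁ ∪ E₂)) ∧
    (∀ E : Set α, F.Admissible E →
      F₁.Admissible (E ∩ F₁.A) ∧
      (F.modification F₁ F₂ R₃ (E ∩ F₁.A) s₀).Admissible (E ∩ F₂.A)) :=
  BSAF.attackSplitting_admissible_general F F₁ F₂ R₃ hsplit s₀ hs₀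
end
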